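/- arXiv:2205.04936 — 5 statements merged into one kernel-verified Lean document; each statement's English description precedes it below -/
import Mathlib

section
/- For all integers n, d, k with 1 ≤ k ≤ d ≤ n, one has C(n+d-1, d)^{1/d} ≤ C(n+k-1, k)^{1/k}. -/
lemma aux1 : ∀ r m : ℕ, r ≤ m → m ^ r ≤ r ^ r * m.choose r := by
  intro r
  induction r with
  | zero => simp
  | succ r ih =>
    intro m hm
    obtain ⟨s, rfl⟩ : ∃ s, m = s + 1 := ⟨m - 1, by omega⟩
    have hs : r ≤ s := by omega
    have key : (s + 1) * Nat.choose s r = Nat.choose (s + 1) (r + 1) * (r + 1) :=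
      Nat.add_one_mul_choose_eq s r
    have ih' := ih s hs
    -- want (s+1)^(r+1) ≤ (r+1)^(r+1) * C(s+1, r+1)
    have hrr : 0 < r ^ r := by rcases Nat.eq_zero_or_pos r with h | h <;> simp [h, Nat.pow_pos]
    -- (s+1)^r * r^r ≤ (r+1)^r * s^r
    have h1 : (s + 1) ^ r * r ^ r ≤ (r + 1) ^ r * s ^ r := by
      rw [← Nat.mul_pow, ← Nat.mul_pow]
      exact Nat.pow_le_pow_left (by nlinarith) r
    have h2 : (s + 1) ^ r * r ^ r ≤ (r + 1) ^ r * (r ^ r * Nat.choose s r) := by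
      calc (s + 1) ^ r * r ^ r ≤ (r + 1) ^ r * s ^ r := h1
        _ ≤ (r + 1) ^ r * (r ^ r * Nat.choose s r) := Nat.mul_le_mul_left _ ih'
    have h3 : (s + 1) ^ r ≤ (r + 1) ^ r * Nat.choose s r := by
      have := h2
      nlinarith [hrr]
    calc (s + 1) ^ (r + 1) = (s + 1) ^ r * (s + 1) := by ring
      _ ≤ (r + 1) ^ r * Nat.choose s r * (s + 1) := Nat.mul_le_mul_right _ h3
      _ = (r + 1) ^ r * ((s + 1) * Nat.choose s r) := by ring
      _ = (r + 1) ^ r * (Nat.choose (s + 1) (r + 1) * (r + 1)) := by rw [key]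
      _ = (r + 1) ^ (r + 1) * Nat.choose (s + 1) (r + 1) := by ring

-- key step: for m ≥ 1 (n = m+1), j ≥ 1: C(m+j+1, j+1)^j ≤ C(m+j, j)^(j+1)
lemma aux2 (m j : ℕ) (hj : 1 ≤ j) :
    Nat.choose (m + j + 1) (j + 1) ^ j ≤ Nat.choose (m + j) j ^ (j + 1) := by
  set a := Nat.choose (m + j) j with ha
  have key : (m + j + 1) * a = Nat.choose (m + j + 1) (j + 1) * (j + 1) :=
    Nat.add_one_mul_choose_eq (m + j) j
  -- need (m+j+1)^j ≤ (j+1)^j * a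
  have h1 : (m + j + 1) ^ j * j ^ j ≤ (j + 1) ^ j * (m + j) ^ j := by
    rw [← Nat.mul_pow, ← Nat.mul_pow]
    exact Nat.pow_le_pow_left (by nlinarith) j
  have h2 := aux1 j (m + j) (by omega)
  have hjj : 0 < j ^ j := by positivity
  have h3 : (m + j + 1) ^ j ≤ (j + 1) ^ j * a := by
    have : (m + j + 1) ^ j * j ^ j ≤ (j + 1) ^ j * (j ^ j * a) := by
      calc (m + j + 1) ^ j * j ^ j ≤ (j + 1) ^ j * (m + j) ^ j := h1
        _ ≤ (j + 1) ^ j * (j ^ j * a) := Nat.mul_le_mul_left _ h2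
    nlinarith
  have hpos : 0 < (j + 1) ^ j := by positivity
  have h4 : (j + 1) ^ j * Nat.choose (m + j + 1) (j + 1) ^ j ≤ (j + 1) ^ j * a ^ (j + 1) := by
    calc (j + 1) ^ j * Nat.choose (m + j + 1) (j + 1) ^ j
        = (Nat.choose (m + j + 1) (j + 1) * (j + 1)) ^ j := by rw [Nat.mul_pow]; ring
      _ = ((m + j + 1) * a) ^ j := by rw [key]
      _ = (m + j + 1) ^ j * a ^ j := by rw [Nat.mul_pow]
      _ ≤ ((j + 1) ^ j * a) * a ^ j := Nat.mul_le_mul_right _ h3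
      _ = (j + 1) ^ j * a ^ (j + 1) := by ring
  exact Nat.le_of_mul_le_mul_left h4 hpos

-- main nat inequality
lemma aux3 (m k : ℕ) (hk : 1 ≤ k) :
    ∀ d, k ≤ d → Nat.choose (m + d) d ^ k ≤ Nat.choose (m + k) k ^ d := by
  intro d
  induction d with
  | zero => intro h; omega
  | succ j ih =>
    intro hkd
    rcases Nat.eq_or_lt_of_le hkd with h | h
    · subst h; rfl
    · have hkj : k ≤ j := by omega
      have hj1 : 1 ≤ j := by omega
      have ihj := ih hkj
      have step := aux2 m j hj1
      have c1 : (Nat.choose (m + j + 1) (j + 1) ^ k) ^ j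
          ≤ (Nat.choose (m + k) k ^ (j + 1)) ^ j := by
        calc (Nat.choose (m + j + 1) (j + 1) ^ k) ^ j
            = (Nat.choose (m + j + 1) (j + 1) ^ j) ^ k := by
              rw [← pow_mul, ← pow_mul, Nat.mul_comm]
          _ ≤ (Nat.choose (m + j) j ^ (j + 1)) ^ k := Nat.pow_le_pow_left step k
          _ = (Nat.choose (m + j) j ^ k) ^ (j + 1) := by
              rw [← pow_mul, ← pow_mul, Nat.mul_comm]
          _ ≤ (Nat.choose (m + k) k ^ j) ^ (j + 1) := Nat.pow_le_pow_left ihj _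
          _ = (Nat.choose (m + k) k ^ (j + 1)) ^ j := by
              rw [← pow_mul, ← pow_mul, Nat.mul_comm]
      exact (Nat.pow_le_pow_iff_left (by omega)).mp c1

/-- For all integers `n, d, k` with `1 ≤ k ≤ d ≤ n`,
`C(n+d-1, d)^(1/d) ≤ C(n+k-1, k)^(1/k)`. -/
theorem binom_root_mono (n d k : ℕ) (hk : 1 ≤ k) (hkd : k ≤ d) (hdn : d ≤ n) :
    ((n + d - 1).choose d : ℝ) ^ ((1 : ℝ) / d) ≤
      ((n + k - 1).choose k : ℝ) ^ ((1 : ℝ) / k) := by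
  obtain ⟨m, rfl⟩ : ∃ m, n = m + 1 := ⟨n - 1, by omega⟩
  have e1 : m + 1 + d - 1 = m + d := by omega
  have e2 : m + 1 + k - 1 = m + k := by omega
  rw [e1, e2]
  have hnat : Nat.choose (m + d) d ^ k ≤ Nat.choose (m + k) k ^ d := aux3 m k hk d hkd
  have hxpos : 0 < Nat.choose (m + d) d := Nat.choose_pos (by omega)
  have hypos : 0 < Nat.choose (m + k) k := Nat.choose_pos (by omega)
  set x : ℝ := (Nat.choose (m + d) d : ℝ) with hx
  set y : ℝ := (Nat.choose (m + k) k : ℝ) with hy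
  have hx0 : (0:ℝ) ≤ x := by positivity
  have hy0 : (0:ℝ) ≤ y := by positivity
  have hd0 : (0:ℝ) < d := by exact_mod_cast (by omega : 0 < d)
  have hk0 : (0:ℝ) < k := by exact_mod_cast (by omega : 0 < k)
  have hcast : x ^ (k:ℝ) ≤ y ^ (d:ℝ) := by
    rw [hx, hy, Real.rpow_natCast, Real.rpow_natCast]
    exact_mod_cast hnat
  have h := Real.rpow_le_rpow (by positivity) hcast
    (by positivity : (0:ℝ) ≤ 1/((d:ℝ)*k))
  rwa [← Real.rpow_mul hx0,
    ← Real.rpow_mul hy0,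
    (show (k:ℝ) * (1/((d:ℝ)*k)) = 1/d by field_simp),
    (show (d:ℝ) * (1/((d:ℝ)*k)) = 1/k by field_simp)] at h
end

section
/- For all integers n, d, k with 1 ≤ k ≤ d ≤ n, one has C(n+d-1, d)^{(d+1)/(2d)} ≤ C(n+d-1, d)^{1/2} · C(n+k-1, k)^{1/(2k)}. -/
lemma aux_P (n' m : ℕ) : (n' + m + 1) ^ m ≤ (m + 1) ^ m * Nat.choose (n' + m) m := by
  induction m with
  | zero => simp
  | succ m ih =>
    have key : Nat.choose (n' + m + 1) (m + 1) * (m + 1)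
        = (n' + m + 1) * Nat.choose (n' + m) m := by
      have h := Nat.add_one_mul_choose_eq (n' + m) m
      simpa [Nat.succ_eq_add_one] using h.symm
    have h1 : (m + 1 + 1) ^ (m + 1) * (m + 1) ^ (m + 1) *
        Nat.choose (n' + m + 1) (m + 1)
        = (m + 1 + 1) ^ (m + 1) * (m + 1) ^ m * ((n' + m + 1) * Nat.choose (n' + m) m) := by
      calc (m + 1 + 1) ^ (m + 1) * (m + 1) ^ (m + 1) * Nat.choose (n' + m + 1) (m + 1)
          = (m + 1 + 1) ^ (m + 1) * (m + 1) ^ m *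
              (Nat.choose (n' + m + 1) (m + 1) * (m + 1)) := by ring
        _ = (m + 1 + 1) ^ (m + 1) * (m + 1) ^ m * ((n' + m + 1) * Nat.choose (n' + m) m) := by
            rw [key]
    have h2 : (m + 1) ^ (m + 1) * (n' + m + 1 + 1) ^ (m + 1)
        ≤ (m + 1 + 1) ^ (m + 1) * (n' + m + 1) ^ (m + 1) := by
      calc (m + 1) ^ (m + 1) * (n' + m + 1 + 1) ^ (m + 1)
          = ((m + 1) * (n' + m + 1 + 1)) ^ (m + 1) := by rw [mul_pow]
        _ ≤ ((m + 1 + 1) * (n' + m + 1)) ^ (m + 1) := by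
            apply Nat.pow_le_pow_left; nlinarith
        _ = (m + 1 + 1) ^ (m + 1) * (n' + m + 1) ^ (m + 1) := by rw [mul_pow]
    have h3 : (m + 1 + 1) ^ (m + 1) * (n' + m + 1) ^ (m + 1)
        ≤ (m + 1 + 1) ^ (m + 1) * (m + 1) ^ m * ((n' + m + 1) * Nat.choose (n' + m) m) := by
      calc (m + 1 + 1) ^ (m + 1) * (n' + m + 1) ^ (m + 1)
          = (m + 1 + 1) ^ (m + 1) * ((n' + m + 1) * (n' + m + 1) ^ m) := by ring
        _ ≤ (m + 1 + 1) ^ (m + 1) * ((n' + m + 1) * ((m + 1) ^ m * Nat.choose (n' + m) m)) := by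
            apply Nat.mul_le_mul_left
            apply Nat.mul_le_mul_left
            exact ih
        _ = (m + 1 + 1) ^ (m + 1) * (m + 1) ^ m * ((n' + m + 1) * Nat.choose (n' + m) m) := by
            ring
    have h4 : (m + 1) ^ (m + 1) * (n' + m + 1 + 1) ^ (m + 1)
        ≤ (m + 1) ^ (m + 1) * ((m + 1 + 1) ^ (m + 1) * Nat.choose (n' + m + 1) (m + 1)) := by
      calc (m + 1) ^ (m + 1) * (n' + m + 1 + 1) ^ (m + 1)
          ≤ (m + 1 + 1) ^ (m + 1) * (m + 1) ^ m * ((n' + m + 1) * Nat.choose (n' + m) m) :=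
            le_trans h2 h3
        _ = (m + 1 + 1) ^ (m + 1) * (m + 1) ^ (m + 1) * Nat.choose (n' + m + 1) (m + 1) := h1.symm
        _ = (m + 1) ^ (m + 1) * ((m + 1 + 1) ^ (m + 1) * Nat.choose (n' + m + 1) (m + 1)) := by
            ring
    exact Nat.le_of_mul_le_mul_left h4 (by positivity)

lemma aux_A (n' m : ℕ) :
    Nat.choose (n' + m + 1) (m + 1) ^ m ≤ Nat.choose (n' + m) m ^ (m + 1) := by
  have key : Nat.choose (n' + m + 1) (m + 1) * (m + 1)
      = (n' + m + 1) * Nat.choose (n' + m) m := by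
    have h := Nat.add_one_mul_choose_eq (n' + m) m
    simpa [Nat.succ_eq_add_one] using h.symm
  have h1 : (m + 1) ^ m * Nat.choose (n' + m + 1) (m + 1) ^ m
      = (n' + m + 1) ^ m * Nat.choose (n' + m) m ^ m := by
    calc (m + 1) ^ m * Nat.choose (n' + m + 1) (m + 1) ^ m
        = (Nat.choose (n' + m + 1) (m + 1) * (m + 1)) ^ m := by rw [mul_pow]; ring
      _ = ((n' + m + 1) * Nat.choose (n' + m) m) ^ m := by rw [key]
      _ = (n' + m + 1) ^ m * Nat.choose (n' + m) m ^ m := by rw [mul_pow]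
  have h2 : (n' + m + 1) ^ m * Nat.choose (n' + m) m ^ m
      ≤ (m + 1) ^ m * Nat.choose (n' + m) m ^ (m + 1) := by
    calc (n' + m + 1) ^ m * Nat.choose (n' + m) m ^ m
        ≤ (m + 1) ^ m * Nat.choose (n' + m) m * Nat.choose (n' + m) m ^ m :=
          Nat.mul_le_mul_right _ (aux_P n' m)
      _ = (m + 1) ^ m * Nat.choose (n' + m) m ^ (m + 1) := by ring
  have h3 : (m + 1) ^ m * Nat.choose (n' + m + 1) (m + 1) ^ m
      ≤ (m + 1) ^ m * Nat.choose (n' + m) m ^ (m + 1) := h1 ▸ h2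
  exact Nat.le_of_mul_le_mul_left h3 (by positivity)

lemma aux_B (n' k : ℕ) (hk : 1 ≤ k) : ∀ d, k ≤ d →
    Nat.choose (n' + d) d ^ k ≤ Nat.choose (n' + k) k ^ d := by
  intro d hd
  induction d, hd using Nat.le_induction with
  | base => rfl
  | succ d hd ih =>
    have hA := aux_A n' d
    have hd1 : 1 ≤ d := le_trans hk hd
    -- (c^k)^d ≤ (C^(d+1))^d
    have h1 : (Nat.choose (n' + d + 1) (d + 1) ^ k) ^ d
        ≤ (Nat.choose (n' + k) k ^ (d + 1)) ^ d := by
      calc (Nat.choose (n' + d + 1) (d + 1) ^ k) ^ d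
          = (Nat.choose (n' + d + 1) (d + 1) ^ d) ^ k := by rw [← pow_mul, ← pow_mul, Nat.mul_comm]
        _ ≤ (Nat.choose (n' + d) d ^ (d + 1)) ^ k := Nat.pow_le_pow_left hA k
        _ = (Nat.choose (n' + d) d ^ k) ^ (d + 1) := by rw [← pow_mul, ← pow_mul, Nat.mul_comm]
        _ ≤ (Nat.choose (n' + k) k ^ d) ^ (d + 1) := Nat.pow_le_pow_left ih (d + 1)
        _ = (Nat.choose (n' + k) k ^ (d + 1)) ^ d := by rw [← pow_mul, ← pow_mul, Nat.mul_comm]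
    have goal := (Nat.pow_le_pow_iff_left (show d ≠ 0 by omega)).mp h1
    simpa [Nat.add_assoc] using goal

/-- For all integers `n, d, k` with `1 ≤ k ≤ d ≤ n`,
`C(n+d-1, d)^((d+1)/(2d)) ≤ C(n+d-1, d)^(1/2) * C(n+k-1, k)^(1/(2k))`. -/
theorem binom_power_split (n d k : ℕ) (hk : 1 ≤ k) (hkd : k ≤ d) (hdn : d ≤ n) :
    ((n + d - 1).choose d : ℝ) ^ (((d : ℝ) + 1) / (2 * d)) ≤
      ((n + d - 1).choose d : ℝ) ^ ((1 : ℝ) / 2) *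
        ((n + k - 1).choose k : ℝ) ^ ((1 : ℝ) / (2 * k)) := by
  obtain ⟨n', rfl⟩ : ∃ n', n = n' + 1 := ⟨n - 1, by omega⟩
  have hnd : n' + 1 + d - 1 = n' + d := by omega
  have hnk : n' + 1 + k - 1 = n' + k := by omega
  rw [hnd, hnk]
  set A : ℝ := ((n' + d).choose d : ℝ) with hA
  set B : ℝ := ((n' + k).choose k : ℝ) with hB
  have hApos : (0 : ℝ) < A := by
    rw [hA]; exact Nat.cast_pos.mpr (Nat.choose_pos (by omega))
  have hBpos : (0 : ℝ) < B := by
    rw [hB]; exact Nat.cast_pos.mpr (Nat.choose_pos (by omega))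
  have hd1 : (1 : ℕ) ≤ d := le_trans hk hkd
  have hdR : (0 : ℝ) < d := by exact_mod_cast hd1
  have hkR : (0 : ℝ) < k := by exact_mod_cast hk
  have hexp : ((d : ℝ) + 1) / (2 * d) = 1 / 2 + 1 / (2 * d) := by
    field_simp
  rw [hexp, Real.rpow_add hApos]
  gcongr
  -- need A ^ (1/(2d)) ≤ B ^ (1/(2k))
  have hnat := aux_B n' k hk d hkd
  have hreal : A ^ (k : ℕ) ≤ B ^ (d : ℕ) := by
    rw [hA, hB, ← Nat.cast_pow, ← Nat.cast_pow]
    exact_mod_cast hnat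
  have hrpow : (A ^ (k : ℕ)) ^ ((1 : ℝ) / (2 * k * d)) ≤ (B ^ (d : ℕ)) ^ ((1 : ℝ) / (2 * k * d)) := by
    apply Real.rpow_le_rpow (by positivity) hreal (by positivity)
  have e1 : (A ^ (k : ℕ)) ^ ((1 : ℝ) / (2 * k * d)) = A ^ ((1 : ℝ) / (2 * d)) := by
    rw [← Real.rpow_natCast A k, ← Real.rpow_mul hApos.le]
    congr 1
    field_simp
  have e2 : (B ^ (d : ℕ)) ^ ((1 : ℝ) / (2 * k * d)) = B ^ ((1 : ℝ) / (2 * k)) := by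
    rw [← Real.rpow_natCast B d, ← Real.rpow_mul hBpos.le]
    congr 1
    field_simp
  rw [e1, e2] at hrpow
  exact hrpow
end

section
/- For all integers n, d, k with 1 ≤ k ≤ d ≤ n, one has C(n, d)^{1/d} ≤ C(n, k)^{1/k}. -/
lemma auxA (k n : ℕ) : (n - k)^k ≤ n.choose k * (k+1)^k := by
  induction k with
  | zero => simp
  | succ k ih =>
    have key := Nat.choose_succ_right_eq n k
    have h1 : (n - (k+1)) * (k+1) ≤ (n - k) * (k+2) :=
      Nat.mul_le_mul (by omega) (by omega)
    have hcancel : (n - (k+1))^(k+1) * (k+1)^(k+1)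
        ≤ (n.choose (k+1) * (k+2)^(k+1)) * (k+1)^(k+1) := by
      calc (n - (k+1))^(k+1) * (k+1)^(k+1)
          = ((n - (k+1)) * (k+1))^(k+1) := (mul_pow _ _ _).symm
        _ ≤ ((n - k) * (k+2))^(k+1) := Nat.pow_le_pow_left h1 _
        _ = (n-k)^k * (n-k) * (k+2)^(k+1) := by rw [mul_pow]; ring
        _ ≤ (n.choose k * (k+1)^k) * (n-k) * (k+2)^(k+1) :=
              Nat.mul_le_mul_right _ (Nat.mul_le_mul_right _ ih)
        _ = (n.choose k * (n-k)) * ((k+1)^k * (k+2)^(k+1)) := by ring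
        _ = (n.choose (k+1) * (k+1)) * ((k+1)^k * (k+2)^(k+1)) := by rw [key]
        _ = (n.choose (k+1) * (k+2)^(k+1)) * (k+1)^(k+1) := by ring
    exact Nat.le_of_mul_le_mul_right hcancel (by positivity)

lemma auxB (k n : ℕ) : n.choose (k+1) ^ k ≤ n.choose k ^ (k+1) := by
  have key := Nat.choose_succ_right_eq n k
  have h : n.choose (k+1)^k * (k+1)^k ≤ n.choose k^(k+1) * (k+1)^k := by
    calc n.choose (k+1)^k * (k+1)^k = (n.choose (k+1)*(k+1))^k := (mul_pow _ _ _).symm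
      _ = (n.choose k * (n-k))^k := by rw [key]
      _ = n.choose k^k * (n-k)^k := mul_pow _ _ _
      _ ≤ n.choose k^k * (n.choose k * (k+1)^k) := Nat.mul_le_mul_left _ (auxA k n)
      _ = n.choose k^(k+1) * (k+1)^k := by ring
  exact Nat.le_of_mul_le_mul_right h (by positivity)

lemma auxC (n k : ℕ) (hk : 1 ≤ k) :
    (n.choose (k+1) : ℝ)^((1:ℝ)/(k+1)) ≤ (n.choose k : ℝ)^((1:ℝ)/k) := by
  have hB : ((n.choose (k+1) : ℝ))^(k:ℕ) ≤ ((n.choose k : ℝ))^((k+1:ℕ)) := by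
    exact_mod_cast auxB k n
  have hk' : (0:ℝ) < k := by exact_mod_cast hk
  have hz : (0:ℝ) ≤ (1:ℝ)/((k:ℝ)*(k+1)) := by positivity
  have := Real.rpow_le_rpow (by positivity) hB hz
  rw [← Real.rpow_natCast (n.choose (k+1) : ℝ) k, ← Real.rpow_natCast (n.choose k : ℝ) (k+1),
    ← Real.rpow_mul (by positivity), ← Real.rpow_mul (by positivity)] at this
  have e1 : (k:ℝ) * ((1:ℝ)/((k:ℝ)*(k+1))) = 1/((k:ℝ)+1) := by
    field_simp
  have e2 : ((k:ℕ)+1:ℝ) * ((1:ℝ)/((k:ℝ)*(k+1))) = 1/(k:ℝ) := by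
    field_simp
  rw [e1] at this
  push_cast at this ⊢
  rw [e2] at this
  convert this using 2

/-- For all integers `n, d, k` with `1 ≤ k ≤ d ≤ n`,
`C(n, d)^(1/d) ≤ C(n, k)^(1/k)`. -/
theorem choose_root_mono (n d k : ℕ) (hk : 1 ≤ k) (hkd : k ≤ d) (hdn : d ≤ n) :
    ((n.choose d : ℝ)) ^ ((1 : ℝ) / d) ≤ ((n.choose k : ℝ)) ^ ((1 : ℝ) / k) := by
  induction d, hkd using Nat.le_induction with
  | base => exact le_refl _
  | succ d hd ih =>
    have h1d : 1 ≤ d := le_trans hk hd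
    have step := auxC n d h1d
    have := ih (le_trans (Nat.le_succ d) hdn)
    refine le_trans ?_ this
    convert step using 3
    · rfl
    · push_cast; rfl
end

section
/- For all integers n, d, k with 1 ≤ k ≤ d ≤ n, one has C(n, d)^{(d+1)/(2d)} ≤ C(d, k)^{-1/2} · C(n-k, d-k)^{1/2} · C(n, k)^{(k+1)/(2k)}. (This is the strengthened form, for unimodular coefficients, of Blei's inequality: the left-hand side equals (∑_{i∈J(d,n)} |a_i|^{2d/(d+1)})^{(d+1)/(2d)} when all |a_i| = 1, and the right-hand side is C(d, k)^{-1/2} times the corresponding Blei product.) -/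
/-- Step: `C(n,j+1)^j ≤ C(n,j)^(j+1)`. -/
lemma choose_step (n j : ℕ) : (n.choose (j+1)) ^ j ≤ (n.choose j) ^ (j+1) := by
  have key : (n - j) ^ j ≤ n.choose j * (j + 1) ^ j := by
    calc (n - j) ^ j ≤ (n + 1 - j) ^ j := by
          exact Nat.pow_le_pow_left (by omega) j
      _ ≤ n.descFactorial j := Nat.pow_sub_le_descFactorial n j
      _ = Nat.factorial j * n.choose j := Nat.descFactorial_eq_factorial_mul_choose n j
      _ ≤ (j + 1) ^ j * n.choose j := by
          refine Nat.mul_le_mul_right _ ?_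
          calc Nat.factorial j ≤ j ^ j := Nat.factorial_le_pow j
            _ ≤ (j + 1) ^ j := Nat.pow_le_pow_left (by omega) j
      _ = n.choose j * (j + 1) ^ j := Nat.mul_comm _ _
  have h1 : (n.choose (j+1)) ^ j * (j+1) ^ j ≤ (n.choose j) ^ (j+1) * (j+1) ^ j := by
    calc (n.choose (j+1)) ^ j * (j+1) ^ j = (n.choose (j+1) * (j+1)) ^ j := by
          rw [Nat.mul_pow]
      _ = (n.choose j * (n - j)) ^ j := by rw [Nat.choose_succ_right_eq]
      _ = (n.choose j) ^ j * (n - j) ^ j := by rw [Nat.mul_pow]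
      _ ≤ (n.choose j) ^ j * (n.choose j * (j + 1) ^ j) :=
          Nat.mul_le_mul_left _ key
      _ = (n.choose j) ^ (j+1) * (j+1) ^ j := by ring
  exact Nat.le_of_mul_le_mul_right h1 (Nat.pow_pos (by omega))

/-- `C(n,d)^k ≤ C(n,k)^d` for `1 ≤ k ≤ d`. -/
lemma choose_pow_le (n k : ℕ) (hk : 1 ≤ k) :
    ∀ d, k ≤ d → (n.choose d) ^ k ≤ (n.choose k) ^ d := by
  intro d
  induction d with
  | zero => intro h; omega
  | succ d ih =>
    intro hkd
    rcases Nat.eq_or_lt_of_le hkd with h | h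
    · subst h; exact le_rfl
    · have hkd' : k ≤ d := by omega
      have hd : 1 ≤ d := le_trans hk hkd'
      have ihd := ih hkd'
      have h1 : (n.choose (d+1)) ^ d ≤ (n.choose d) ^ (d+1) := choose_step n d
      have h2 : ((n.choose (d+1)) ^ k) ^ d ≤ ((n.choose k) ^ (d+1)) ^ d := by
        calc ((n.choose (d+1)) ^ k) ^ d = ((n.choose (d+1)) ^ d) ^ k := by
              rw [← Nat.pow_mul, ← Nat.pow_mul, Nat.mul_comm]
          _ ≤ ((n.choose d) ^ (d+1)) ^ k := Nat.pow_le_pow_left h1 k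
          _ = ((n.choose d) ^ k) ^ (d+1) := by
              rw [← Nat.pow_mul, ← Nat.pow_mul, Nat.mul_comm]
          _ ≤ ((n.choose k) ^ d) ^ (d+1) := Nat.pow_le_pow_left ihd (d+1)
          _ = ((n.choose k) ^ (d+1)) ^ d := by
              rw [← Nat.pow_mul, ← Nat.pow_mul, Nat.mul_comm]
      exact (Nat.pow_le_pow_iff_left (by omega)).mp h2

/-- Strengthened Blei inequality for unimodular coefficients (binomial form):
for `1 ≤ k ≤ d ≤ n`,
`C(n, d)^((d+1)/(2d)) ≤ C(d, k)^(-1/2) * C(n-k, d-k)^(1/2) * C(n, k)^((k+1)/(2k))`. -/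
theorem blei_unimodular_binom (n d k : ℕ) (hk : 1 ≤ k) (hkd : k ≤ d) (hdn : d ≤ n) :
    ((n.choose d : ℝ)) ^ (((d : ℝ) + 1) / (2 * d)) ≤
      ((d.choose k : ℝ)) ^ (-(1 : ℝ) / 2) *
        (((n - k).choose (d - k) : ℝ)) ^ ((1 : ℝ) / 2) *
        ((n.choose k : ℝ)) ^ (((k : ℝ) + 1) / (2 * k)) := by
  have hN : (0:ℝ) < (n.choose d : ℝ) := by
    exact_mod_cast Nat.choose_pos hdn
  have hA : (0:ℝ) < (d.choose k : ℝ) := by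
    exact_mod_cast Nat.choose_pos hkd
  have hB : (0:ℝ) < ((n - k).choose (d - k) : ℝ) := by
    exact_mod_cast Nat.choose_pos (Nat.sub_le_sub_right hdn k)
  have hM : (0:ℝ) < (n.choose k : ℝ) := by
    exact_mod_cast Nat.choose_pos (le_trans hkd hdn)
  have hNat : (n.choose d) ^ k ≤ (n.choose k) ^ d := choose_pow_le n k hk d hkd
  have hkey : (k:ℝ) * Real.log (n.choose d) ≤ (d:ℝ) * Real.log (n.choose k) := by
    have := Real.log_le_log (by positivity : (0:ℝ) < ((n.choose d : ℝ)) ^ k)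
      (by exact_mod_cast hNat : ((n.choose d : ℝ)) ^ k ≤ ((n.choose k : ℝ)) ^ d)
    rwa [Real.log_pow, Real.log_pow] at this
  have hid : (d.choose k : ℝ) * (n.choose d : ℝ) =
      (n.choose k : ℝ) * ((n - k).choose (d - k) : ℝ) := by
    have h := Nat.choose_mul (n := n) hkd
    have h' : d.choose k * n.choose d = n.choose k * (n - k).choose (d - k) := by
      rw [Nat.mul_comm]; exact h
    exact_mod_cast congrArg (Nat.cast : ℕ → ℝ) h'
  have hlogid : Real.log (d.choose k) + Real.log (n.choose d) =
      Real.log (n.choose k) + Real.log ((n - k).choose (d - k)) := by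
    rw [← Real.log_mul hA.ne' hN.ne', ← Real.log_mul hM.ne' hB.ne', hid]
  have hLN : 0 ≤ Real.log (n.choose d) := Real.log_nonneg (by exact_mod_cast Nat.choose_pos hdn)
  have hLM : 0 ≤ Real.log (n.choose k) :=
    Real.log_nonneg (by exact_mod_cast Nat.choose_pos (le_trans hkd hdn))
  have hdR : (1:ℝ) ≤ (d:ℝ) := by exact_mod_cast le_trans hk hkd
  have hkR : (1:ℝ) ≤ (k:ℝ) := by exact_mod_cast hk
  rw [← Real.log_le_log_iff (by positivity) (by positivity), Real.log_rpow hN,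
    Real.log_mul (by positivity) (by positivity), Real.log_mul (by positivity) (by positivity),
    Real.log_rpow hA, Real.log_rpow hB, Real.log_rpow hM]
  have h2 : 1 / (2 * (d:ℝ)) * Real.log (n.choose d) ≤
      1 / (2 * (k:ℝ)) * Real.log (n.choose k) := by
    rw [div_mul_eq_mul_div, div_mul_eq_mul_div,
      div_le_div_iff₀ (by linarith) (by linarith)]
    nlinarith [hkey, hdR, hkR]
  have hd0 : (d:ℝ) ≠ 0 := by linarith
  have hk0 : (k:ℝ) ≠ 0 := by linarith
  have ed : ((d:ℝ) + 1) / (2 * d) = 1 / 2 + 1 / (2 * (d:ℝ)) := by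
    field_simp
  have ek : ((k:ℝ) + 1) / (2 * k) = 1 / 2 + 1 / (2 * (k:ℝ)) := by
    field_simp
  rw [ed, ek]
  nlinarith [hlogid, h2]
end

section
/- For all integers n, d ≥ 1 with n ≤ d² and every homogeneous polynomial P of degree d in n complex variables with unimodular coefficients, one has C(n+d-1, d)^{(d+1)/(2d)} ≤ √(e·(d+1)) · ‖P‖_{L∞(𝕋ⁿ)}. -/
open Finset

lemma multiset_card_finsum {ι β : Type*} (s : Finset ι) (f : ι → Multiset β) :
    Multiset.card (∑ i ∈ s, f i) = ∑ i ∈ s, Multiset.card (f i) := by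
  induction s using Finset.cons_induction with
  | empty => simp
  | cons a s ha ih => simp [Finset.sum_cons, ih]

/-- Stars and bars: cardinality of `antidiagonalTuple`. -/
lemma adt_card (n d : ℕ) :
    (Finset.Nat.antidiagonalTuple n d).card = (n + d - 1).choose d := by
  classical
  rw [← Nat.multichoose_eq]
  have h1 : Nat.multichoose n d = Fintype.card (Sym (Fin n) d) := by
    rw [Sym.card_sym_eq_multichoose, Fintype.card_fin]
  have key : ∀ (m : Multiset (Fin n)), ∑ i : Fin n, m.count i = Multiset.card m := by
    intro m
    rw [← Multiset.toFinset_sum_count_eq]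
    exact (Finset.sum_subset (Finset.subset_univ _) (by
      intro x _ hx
      simpa [Multiset.count_eq_zero] using fun h => hx (Multiset.mem_toFinset.2 h))).symm
  have e : {x // x ∈ Finset.Nat.antidiagonalTuple n d} ≃ Sym (Fin n) d :=
    { toFun := fun x => ⟨∑ i : Fin n, Multiset.replicate (x.1 i) i, by
        rw [multiset_card_finsum]
        simpa [Multiset.card_replicate] using (Finset.Nat.mem_antidiagonalTuple.1 x.2)⟩
      invFun := fun s => ⟨fun i => s.1.count i, by
        rw [Finset.Nat.mem_antidiagonalTuple, key, s.2]⟩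
      left_inv := by
        rintro ⟨x, hx⟩
        ext i
        simp [Multiset.count_sum', Multiset.count_replicate]
      right_inv := by
        rintro ⟨m, hm⟩
        refine Subtype.ext ?_
        simp only
        ext j
        simp [Multiset.count_sum', Multiset.count_replicate] }
  rw [h1, ← Fintype.card_coe]
  exact Fintype.card_congr e


lemma exists_big (n d : ℕ) (a : (Fin n → ℕ) → ℂ)
    (ha : ∀ α ∈ Finset.Nat.antidiagonalTuple n d, ‖a α‖ = 1) :
    ∃ z : Fin n → {c : ℂ // ‖c‖ = 1},
      ((Finset.Nat.antidiagonalTuple n d).card : ℝ) ≤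
        ‖∑ α ∈ Finset.Nat.antidiagonalTuple n d,
          a α * ∏ i, (z i : ℂ) ^ α i‖ ^ 2 := by
  classical
  set S := Finset.Nat.antidiagonalTuple n d with hS
  set ω : ℂ := Complex.exp (2 * ↑Real.pi * Complex.I / ((d : ℂ) + 1)) with hωdef
  have hω : IsPrimitiveRoot ω (d + 1) := by
    have := Complex.isPrimitiveRoot_exp (d + 1) (Nat.succ_ne_zero d)
    simpa [hωdef] using this
  have habs : ‖ω‖ = 1 := by
    have h0 : ω = Complex.exp ((↑(2 * Real.pi / (d + 1)) : ℂ) * Complex.I) := by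
      rw [hωdef]; push_cast; ring_nf
    rw [h0, Complex.norm_exp_ofReal_mul_I]
  have hω0 : ω ≠ 0 := by
    intro h; rw [h] at habs; simp at habs
  have hconj : (starRingEnd ℂ) ω = ω⁻¹ := by
    rw [Complex.inv_eq_conj habs]
  -- geometric sum
  have geo : ∀ p q : ℕ, p ≤ d → q ≤ d →
      ∑ k ∈ Finset.range (d + 1), (ω ^ p * (starRingEnd ℂ) ω ^ q) ^ k
        = if p = q then ((d : ℂ) + 1) else 0 := by
    intro p q hp hq
    have hcz : ω ^ p * (starRingEnd ℂ) ω ^ q = ω ^ ((p : ℤ) - q) := by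
      rw [hconj, ← zpow_natCast ω p, ← zpow_natCast ω⁻¹ q, inv_zpow, ← zpow_neg,
        ← zpow_add₀ hω0]
      ring_nf
    by_cases hpq : p = q
    · subst hpq
      simp only [if_pos rfl, hcz, sub_self, zpow_zero, one_pow]
      simp [Finset.sum_const, Finset.card_range]
    · rw [if_neg hpq]
      have hc1 : ω ^ p * (starRingEnd ℂ) ω ^ q ≠ 1 := by
        rw [hcz]
        intro h
        have hdvd : ((d : ℤ) + 1) ∣ ((p : ℤ) - q) := by
          have := (hω.zpow_eq_one_iff_dvd ((p : ℤ) - q)).1 h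
          simpa [Nat.cast_add, Nat.cast_one] using this
        have hne : (p : ℤ) - q ≠ 0 := by
          intro h0
          exact hpq (by omega)
        have habs' : |(p : ℤ) - q| ≤ d := by
          rw [abs_le]; omega
        have := Int.le_of_dvd (abs_pos.2 hne) ((dvd_abs _ _).2 hdvd)
        omega
      have hcd : (ω ^ p * (starRingEnd ℂ) ω ^ q) ^ (d + 1) = 1 := by
        rw [hcz, ← zpow_natCast, ← zpow_mul, mul_comm, zpow_mul]
        have : ω ^ ((d : ℤ) + 1) = 1 := by
          have := hω.zpow_eq_one
          simpa [Nat.cast_add, Nat.cast_one] using this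
        rw [show ((d + 1 : ℕ) : ℤ) = (d : ℤ) + 1 by push_cast; ring, this, one_zpow]
      rw [geom_sum_eq hc1, hcd]
      simp
  -- bound on entries
  have hle : ∀ α ∈ S, ∀ i, α i ≤ d := by
    intro α hα i
    have h := Finset.Nat.mem_antidiagonalTuple.1 hα
    calc α i ≤ ∑ j, α j := Finset.single_le_sum (fun j _ => Nat.zero_le _) (Finset.mem_univ i)
    _ = d := h
  -- the grid polynomial values
  set F : (Fin n → Fin (d + 1)) → ℂ :=
    fun j => ∑ α ∈ S, a α * ∏ i, (ω ^ (j i : ℕ)) ^ α i with hF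
  -- main orthogonality identity
  have conjF : ∀ j, (starRingEnd ℂ) (F j) =
      ∑ β ∈ S, (starRingEnd ℂ) (a β) * ∏ i, ((starRingEnd ℂ) ω ^ (j i : ℕ)) ^ β i := by
    intro j
    simp only [hF, map_sum, map_mul, map_prod, map_pow]
  have inner : ∀ α ∈ S, ∀ β ∈ S,
      ∑ j : Fin n → Fin (d + 1),
          (∏ i, (ω ^ (j i : ℕ)) ^ α i) * ∏ i, ((starRingEnd ℂ) ω ^ (j i : ℕ)) ^ β i
        = ∏ i, (if α i = β i then ((d : ℂ) + 1) else 0) := by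
    intro α hα β hβ
    have hre : ∀ j : Fin n → Fin (d + 1),
        (∏ i, (ω ^ (j i : ℕ)) ^ α i) * ∏ i, ((starRingEnd ℂ) ω ^ (j i : ℕ)) ^ β i
          = ∏ i, (ω ^ α i * (starRingEnd ℂ) ω ^ β i) ^ (j i : ℕ) := by
      intro j
      rw [← Finset.prod_mul_distrib]
      refine Finset.prod_congr rfl fun i _ => ?_
      rw [mul_pow, pow_right_comm, pow_right_comm ((starRingEnd ℂ) ω)]
    simp_rw [hre]
    calc ∑ j : Fin n → Fin (d + 1), ∏ i, (ω ^ α i * (starRingEnd ℂ) ω ^ β i) ^ (j i : ℕ)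
        = ∑ j ∈ Fintype.piFinset (fun _ : Fin n => (Finset.univ : Finset (Fin (d + 1)))),
            ∏ i, (ω ^ α i * (starRingEnd ℂ) ω ^ β i) ^ (j i : ℕ) := by
          rw [Fintype.piFinset_univ]
      _ = ∏ i, ∑ k : Fin (d + 1), (ω ^ α i * (starRingEnd ℂ) ω ^ β i) ^ (k : ℕ) :=
          (Finset.prod_univ_sum (fun _ : Fin n => (Finset.univ : Finset (Fin (d + 1))))
            (fun i k => (ω ^ α i * (starRingEnd ℂ) ω ^ β i) ^ (k : ℕ))).symm
      _ = ∏ i, (if α i = β i then ((d : ℂ) + 1) else 0) := by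
          refine Finset.prod_congr rfl fun i _ => ?_
          rw [Fin.sum_univ_eq_sum_range (fun k => (ω ^ α i * (starRingEnd ℂ) ω ^ β i) ^ k)]
          exact geo (α i) (β i) (hle α hα i) (hle β hβ i)
  have key : ∑ j : Fin n → Fin (d + 1), F j * (starRingEnd ℂ) (F j)
      = (S.card : ℂ) * ((d : ℂ) + 1) ^ n := by
    have expand : ∀ j, F j * (starRingEnd ℂ) (F j) = ∑ α ∈ S, ∑ β ∈ S,
        (a α * (starRingEnd ℂ) (a β)) *
          ((∏ i, (ω ^ (j i : ℕ)) ^ α i) * ∏ i, ((starRingEnd ℂ) ω ^ (j i : ℕ)) ^ β i) := by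
      intro j
      rw [conjF j, hF, Finset.sum_mul_sum]
      exact Finset.sum_congr rfl fun α _ => Finset.sum_congr rfl fun β _ => by ring
    calc ∑ j : Fin n → Fin (d + 1), F j * (starRingEnd ℂ) (F j)
        = ∑ α ∈ S, ∑ β ∈ S, (a α * (starRingEnd ℂ) (a β)) *
            ∑ j : Fin n → Fin (d + 1),
              (∏ i, (ω ^ (j i : ℕ)) ^ α i) * ∏ i, ((starRingEnd ℂ) ω ^ (j i : ℕ)) ^ β i := by
          simp_rw [expand]
          rw [Finset.sum_comm]
          refine Finset.sum_congr rfl fun α _ => ?_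
          rw [Finset.sum_comm]
          refine Finset.sum_congr rfl fun β _ => ?_
          rw [← Finset.mul_sum]
      _ = ∑ α ∈ S, ∑ β ∈ S, (a α * (starRingEnd ℂ) (a β)) *
            ∏ i, (if α i = β i then ((d : ℂ) + 1) else 0) := by
          refine Finset.sum_congr rfl fun α hα => Finset.sum_congr rfl fun β hβ => ?_
          rw [inner α hα β hβ]
      _ = ∑ α ∈ S, ((d : ℂ) + 1) ^ n := by
          refine Finset.sum_congr rfl fun α hα => ?_
          rw [Finset.sum_eq_single_of_mem α hα]
          · have hdiag : ∀ i : Fin n, (if α i = α i then ((d : ℂ) + 1) else 0) = ((d : ℂ) + 1) :=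
              fun i => if_pos rfl
            rw [Finset.prod_congr rfl fun i _ => hdiag i, Finset.prod_const,
              Complex.mul_conj]
            have : Complex.normSq (a α) = 1 := by
              rw [← Complex.sq_norm, ha α hα, one_pow]
            rw [this, Finset.card_univ, Fintype.card_fin]
            simp
          · intro β hβ hne
            obtain ⟨i, hi⟩ := Function.ne_iff.1 hne
            have hz : (if α i = β i then ((d : ℂ) + 1) else 0) = 0 :=
              if_neg (fun h => hi h.symm)
            rw [Finset.prod_eq_zero (Finset.mem_univ i) hz, mul_zero]
      _ = (S.card : ℂ) * ((d : ℂ) + 1) ^ n := by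
          rw [Finset.sum_const, nsmul_eq_mul]
  have real_id : ∑ j : Fin n → Fin (d + 1), ‖F j‖ ^ 2
      = (S.card : ℝ) * ((d : ℝ) + 1) ^ n := by
    have lhs : ∑ j : Fin n → Fin (d + 1), F j * (starRingEnd ℂ) (F j)
        = (((∑ j : Fin n → Fin (d + 1), ‖F j‖ ^ 2 : ℝ)) : ℂ) := by
      rw [Complex.ofReal_sum]
      refine Finset.sum_congr rfl fun j _ => ?_
      rw [Complex.mul_conj, ← Complex.sq_norm, Complex.ofReal_pow]
    have h2 : (((∑ j : Fin n → Fin (d + 1), ‖F j‖ ^ 2 : ℝ)) : ℂ)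
        = (((S.card : ℝ) * ((d : ℝ) + 1) ^ n : ℝ) : ℂ) := by
      rw [← lhs, key]; push_cast; ring
    exact_mod_cast h2
  have pig : ∃ j : Fin n → Fin (d + 1), (S.card : ℝ) ≤ ‖F j‖ ^ 2 := by
    have hne : (Finset.univ : Finset (Fin n → Fin (d + 1))).Nonempty := Finset.univ_nonempty
    have hsum : ∑ _j : Fin n → Fin (d + 1), (S.card : ℝ)
        ≤ ∑ j : Fin n → Fin (d + 1), ‖F j‖ ^ 2 := by
      rw [real_id, Finset.sum_const, Finset.card_univ, Fintype.card_fun, Fintype.card_fin,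
        Fintype.card_fin, nsmul_eq_mul]
      apply le_of_eq
      push_cast
      ring
    obtain ⟨j, _, hj⟩ := Finset.exists_le_of_sum_le hne hsum
    exact ⟨j, hj⟩
  obtain ⟨j, hj⟩ := pig
  refine ⟨fun i => ⟨ω ^ (j i : ℕ), by rw [norm_pow, habs, one_pow]⟩, ?_⟩
  simpa [hF] using hj

/-- For `n ≤ d²` and every homogeneous polynomial `P` of degree `d` in `n`
complex variables with unimodular coefficients,
`C(n+d-1, d)^((d+1)/(2d)) ≤ √(e·(d+1)) · ‖P‖_{L∞(𝕋ⁿ)}`. -/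
theorem sidon_unimodular_small_n (n d : ℕ) (hn : 1 ≤ n) (hd : 1 ≤ d)
    (hnd : n ≤ d ^ 2) (a : (Fin n → ℕ) → ℂ)
    (ha : ∀ α ∈ Finset.Nat.antidiagonalTuple n d, ‖a α‖ = 1) :
    ((n + d - 1).choose d : ℝ) ^ (((d : ℝ) + 1) / (2 * d)) ≤
      Real.sqrt (Real.exp 1 * ((d : ℝ) + 1)) *
        ⨆ z : Fin n → {c : ℂ // ‖c‖ = 1},
          ‖∑ α ∈ Finset.Nat.antidiagonalTuple n d,
            a α * ∏ i, (z i : ℂ) ^ α i‖ := by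
  classical
  set S := Finset.Nat.antidiagonalTuple n d with hS
  set N : ℕ := (n + d - 1).choose d with hNdef
  have hcard : S.card = N := adt_card n d
  set M := ⨆ z : Fin n → {c : ℂ // ‖c‖ = 1},
      ‖∑ α ∈ S, a α * ∏ i, (z i : ℂ) ^ α i‖ with hM
  have hub : ∀ z : Fin n → {c : ℂ // ‖c‖ = 1},
      ‖∑ α ∈ S, a α * ∏ i, (z i : ℂ) ^ α i‖ ≤ (N : ℝ) := by
    intro z
    calc ‖∑ α ∈ S, a α * ∏ i, (z i : ℂ) ^ α i‖
        ≤ ∑ α ∈ S, ‖a α * ∏ i, (z i : ℂ) ^ α i‖ := norm_sum_le _ _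
      _ = ∑ _α ∈ S, (1 : ℝ) := by
          refine Finset.sum_congr rfl fun α hα => ?_
          rw [norm_mul, ha α hα, one_mul, norm_prod]
          rw [Finset.prod_congr rfl fun i _ => by rw [norm_pow, (z i).2, one_pow]]
          exact Finset.prod_const_one
      _ = (N : ℝ) := by rw [Finset.sum_const, hcard, nsmul_eq_mul, mul_one]
  have hbdd : BddAbove (Set.range fun z : Fin n → {c : ℂ // ‖c‖ = 1} =>
      ‖∑ α ∈ S, a α * ∏ i, (z i : ℂ) ^ α i‖) := by
    refine ⟨(N : ℝ), ?_⟩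
    rintro _ ⟨z, rfl⟩
    exact hub z
  obtain ⟨z0, hz0⟩ := exists_big n d a ha
  have hMz : ‖∑ α ∈ S, a α * ∏ i, (z0 i : ℂ) ^ α i‖ ≤ M := le_ciSup hbdd z0
  have hsqrt : Real.sqrt N ≤ M := by
    have h1 : (N : ℝ) ≤ (‖∑ α ∈ S, a α * ∏ i, (z0 i : ℂ) ^ α i‖) ^ 2 := by
      rw [← hcard]; exact hz0
    calc Real.sqrt N ≤ Real.sqrt ((‖∑ α ∈ S, a α * ∏ i, (z0 i : ℂ) ^ α i‖) ^ 2) :=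
          Real.sqrt_le_sqrt h1
      _ = ‖∑ α ∈ S, a α * ∏ i, (z0 i : ℂ) ^ α i‖ :=
          Real.sqrt_sq (norm_nonneg _)
      _ ≤ M := hMz
  have hNpos : 0 < N := Nat.choose_pos (by omega)
  have hNr : (0 : ℝ) < N := by exact_mod_cast hNpos
  set E : ℝ := Real.exp 1 * ((d : ℝ) + 1) with hE
  have hEpos : 0 < E := by positivity
  have hfpos : (0 : ℝ) < (d.factorial : ℝ) := by exact_mod_cast d.factorial_pos
  have hNle : (N : ℝ) ≤ E ^ d := by
    have hnat : N * d.factorial ≤ (d * (d + 1)) ^ d := by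
      calc N * d.factorial = d.factorial * N := mul_comm _ _
        _ = (n + d - 1).descFactorial d := by
            rw [hNdef, ← Nat.descFactorial_eq_factorial_mul_choose]
        _ ≤ (n + d - 1) ^ d := Nat.descFactorial_le_pow _ _
        _ ≤ (d * (d + 1)) ^ d := by
            refine Nat.pow_le_pow_left ?_ d
            have h2 : n + d - 1 ≤ d ^ 2 + d := by
              exact (Nat.sub_le _ _).trans (Nat.add_le_add_right hnd d)
            calc n + d - 1 ≤ d ^ 2 + d := h2
              _ = d * (d + 1) := by ring
    have h1 : (N : ℝ) * (d.factorial : ℝ) ≤ ((d : ℝ) * ((d : ℝ) + 1)) ^ d := by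
      calc (N : ℝ) * (d.factorial : ℝ) = ((N * d.factorial : ℕ) : ℝ) := by push_cast; ring
        _ ≤ (((d * (d + 1)) ^ d : ℕ) : ℝ) := Nat.cast_le.2 hnat
        _ = ((d : ℝ) * ((d : ℝ) + 1)) ^ d := by push_cast; ring
    have h2 : ((d : ℝ)) ^ d ≤ Real.exp 1 ^ d * (d.factorial : ℝ) := by
      have h3 : (d : ℝ) ^ d / (d.factorial : ℝ) ≤ Real.exp d := by
        refine le_trans ?_ (Real.sum_le_exp_of_nonneg (by positivity) (d + 1))
        exact Finset.single_le_sum (f := fun i => (d : ℝ) ^ i / (i.factorial : ℝ))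
          (fun i _ => by positivity) (Finset.self_mem_range_succ d)
      rw [div_le_iff₀ hfpos] at h3
      calc (d : ℝ) ^ d ≤ Real.exp d * d.factorial := h3
        _ = Real.exp 1 ^ d * d.factorial := by rw [Real.exp_one_pow]
    have hmain : (N : ℝ) * (d.factorial : ℝ) ≤ E ^ d * (d.factorial : ℝ) := by
      calc (N : ℝ) * (d.factorial : ℝ) ≤ ((d : ℝ) * ((d : ℝ) + 1)) ^ d := h1
        _ = (d : ℝ) ^ d * ((d : ℝ) + 1) ^ d := mul_pow _ _ _
        _ ≤ (Real.exp 1 ^ d * (d.factorial : ℝ)) * ((d : ℝ) + 1) ^ d :=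
            mul_le_mul_of_nonneg_right h2 (by positivity)
        _ = E ^ d * (d.factorial : ℝ) := by rw [hE, mul_pow]; ring
    exact le_of_mul_le_mul_right hmain hfpos
  have hd0 : (d : ℝ) ≠ 0 := by positivity
  have split : ((N : ℝ)) ^ (((d : ℝ) + 1) / (2 * d)) = (N : ℝ) ^ ((1 : ℝ) / (2 * d)) * Real.sqrt N := by
    rw [Real.sqrt_eq_rpow, ← Real.rpow_add hNr]
    congr 1
    field_simp
    ring
  have h4 : (N : ℝ) ^ ((1 : ℝ) / (2 * d)) ≤ Real.sqrt E := by
    calc (N : ℝ) ^ ((1 : ℝ) / (2 * d)) ≤ (E ^ d) ^ ((1 : ℝ) / (2 * d)) :=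
          Real.rpow_le_rpow hNr.le hNle (by positivity)
      _ = E ^ ((d : ℝ) * (1 / (2 * d))) := by
          rw [← Real.rpow_natCast E d, ← Real.rpow_mul hEpos.le]
      _ = E ^ ((1 : ℝ) / 2) := by
          congr 1
          field_simp
      _ = Real.sqrt E := (Real.sqrt_eq_rpow E).symm
  calc ((N : ℝ)) ^ (((d : ℝ) + 1) / (2 * d)) = (N : ℝ) ^ ((1 : ℝ) / (2 * d)) * Real.sqrt N := split
    _ ≤ Real.sqrt E * M := mul_le_mul h4 hsqrt (Real.sqrt_nonneg _) (Real.sqrt_nonneg _)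
end
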